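/- arXiv:2409.06974 — 3 statements merged into one kernel-verified Lean document; each statement's English description precedes it below -/
import Mathlib

section
/- Let α be a finite alphabet and let L be an infinite union-free language over α. Then there exist a finite language L_l and regular languages L_i and L_r over α with L_i ≠ ∅ and L_i ≠ {ε} such that L = L_l·L_i∗·L_r. -/
open Language Computability

universe u

variable {α : Type}

/-- The n-fold repetition (power) of a word. -/
def wordPow (y : List α) : ℕ → List α
  | 0 => []
  | n + 1 => y ++ wordPow y n

/-- A star language: the Kleene star of some regular language. -/
def IsStarLang (L : Language α) : Prop :=
  ∃ H : Language α, H.IsRegular ∧ L = H∗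

/-- A left-sided comet. -/
def IsLeftComet (L : Language α) : Prop :=
  ∃ E G : Language α, E.IsRegular ∧ G.IsRegular ∧ G ≠ 0 ∧ G ≠ 1 ∧ L = E * G∗

/-- A right-sided comet. -/
def IsRightComet (L : Language α) : Prop :=
  ∃ G H : Language α, G.IsRegular ∧ H.IsRegular ∧ G ≠ 0 ∧ G ≠ 1 ∧ L = G∗ * H

/-- A two-sided comet. -/
def IsTwoComet (L : Language α) : Prop :=
  ∃ E G H : Language α, E.IsRegular ∧ G.IsRegular ∧ H.IsRegular ∧
    G ≠ 0 ∧ G ≠ 1 ∧ L = E * G∗ * H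

/-- A regular expression is union-free if it is built from the atoms `0` (empty language)
and single letters using only concatenation and Kleene star. -/
def RegularExpression.UnionFree : RegularExpression α → Prop
  | RegularExpression.zero => True
  | RegularExpression.epsilon => False
  | RegularExpression.char _ => True
  | RegularExpression.plus _ _ => False
  | RegularExpression.comp r s => r.UnionFree ∧ s.UnionFree
  | RegularExpression.star r => r.UnionFree

/-- A union-free language: the language of a union-free regular expression. -/
def IsUnionFree (L : Language α) : Prop :=
  ∃ r : RegularExpression α, r.UnionFree ∧ r.matches' = L

/-- A monoidal language. -/
def IsMonoidal (L : Language α) : Prop := L = (⊤ : Language α)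

/-- The language of one-letter words with letters from `X`. -/
def lettersLang (X : Set α) : Language α := {w : List α | ∃ a ∈ X, w = [a]}

/-- A combinational language: `⊤ · X` for a set `X` of one-letter words. -/
def IsCombinational (L : Language α) : Prop :=
  ∃ X : Set α, L = (⊤ : Language α) * lettersLang X

/-- A symmetric definite language: `E · ⊤ · H` with `E, H` regular. -/
def IsSymDef (L : Language α) : Prop :=
  ∃ E H : Language α, E.IsRegular ∧ H.IsRegular ∧ L = E * (⊤ : Language α) * H

/-- A nilpotent language: finite or with finite complement. -/
def IsNilpotentLang (L : Language α) : Prop := L.Finite ∨ (Lᶜ : Language α).Finite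

/-- A definite language: `A ∪ ⊤ · B` with `A, B` finite. -/
def IsDefinite (L : Language α) : Prop :=
  ∃ A B : Language α, A.Finite ∧ B.Finite ∧ L = A + (⊤ : Language α) * B  -- `+` of languages is union

/-- An ordered language: accepted by a DFA with linearly ordered state set
whose transition maps are all monotone. -/
def IsOrdered (L : Language α) : Prop :=
  ∃ (σ : Type) (_ : Fintype σ) (_ : LinearOrder σ) (M : DFA α σ),
    (∀ a : α, Monotone fun q => M.step q a) ∧ M.accepts = L

/-- The non-counting property. -/
def HasNonCounting (L : Language α) : Prop :=
  ∃ k : ℕ, 1 ≤ k ∧ ∀ x y z : List α,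
    (x ++ wordPow y k ++ z ∈ L ↔ x ++ wordPow y (k + 1) ++ z ∈ L)

/-- A non-counting (star-free) regular language. -/
def IsNonCounting (L : Language α) : Prop := L.IsRegular ∧ HasNonCounting L

/-- The power-separating property. -/
def HasPowerSep (L : Language α) : Prop :=
  ∃ m : ℕ, 1 ≤ m ∧ ∀ x : List α,
    (∀ n, m ≤ n → wordPow x n ∉ L) ∨ (∀ n, m ≤ n → wordPow x n ∈ L)

/-- A power-separating regular language. -/
def IsPowerSep (L : Language α) : Prop := L.IsRegular ∧ HasPowerSep L

/-- A suffix-closed (regular) language. -/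
def IsSuffixClosed (L : Language α) : Prop :=
  L.IsRegular ∧ ∀ x y : List α, x ++ y ∈ L → y ∈ L

/-- A circular (regular) language. -/
def IsCircular (L : Language α) : Prop :=
  L.IsRegular ∧ ∀ u v : List α, u ++ v ∈ L → v ++ u ∈ L

/-- A commutative (regular) language. -/
def IsCommutative (L : Language α) : Prop :=
  L.IsRegular ∧ ∀ w ∈ L, ∀ v : List α, w.Perm v → v ∈ L

/-- The reversal of a language. -/
def Reversal (L : Language α) : Language α := {w : List α | ∃ v ∈ L, w = v.reverse}

/-- Two families of languages are incomparable if neither is contained in the other. -/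
def Incomparable (P Q : Language α → Prop) : Prop :=
  (∃ L : Language α, P L ∧ ¬ Q L) ∧ (∃ L : Language α, Q L ∧ ¬ P L)

/-- A finite language. -/
def IsFiniteLang (L : Language α) : Prop := L.Finite



section AuxRegular

variable {α : Type}

private lemma concat_inj' {p q : List α} {a b : α} (h : p ++ [b] = q ++ [a]) :
    p = q ∧ b = a := by
  obtain ⟨h1, h2⟩ := List.append_inj' h rfl
  exact ⟨h1, by injection h2⟩

private lemma append_mem_kstar' {l : Language α} {u v : List α}
    (hu : u ∈ l∗) (hv : v ∈ l∗) : u ++ v ∈ l∗ := by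
  rw [Language.mem_kstar] at hu hv ⊢
  obtain ⟨S, rfl, hS⟩ := hu
  obtain ⟨T, rfl, hT⟩ := hv
  refine ⟨S ++ T, by simp, ?_⟩
  intro y hy
  rcases List.mem_append.mp hy with h | h
  exacts [hS y h, hT y h]

private lemma kstar_concat_decomp {l : Language α} {w : List α} {a : α}
    (h : w ++ [a] ∈ l∗) : ∃ u x, u ∈ l∗ ∧ x ++ [a] ∈ l ∧ u ++ x = w := by
  rw [Language.mem_kstar_iff_exists_nonempty] at h
  obtain ⟨S, hflat, hS⟩ := h
  rcases S.eq_nil_or_concat with rfl | ⟨S₀, y, rfl⟩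
  · simp at hflat
  · have hy := hS y (by simp)
    rcases y.eq_nil_or_concat with rfl | ⟨y', b, rfl⟩
    · exact absurd rfl hy.2
    · have heq : S₀.flatten ++ y' ++ [b] = w ++ [a] := by
        simpa [List.append_assoc] using hflat.symm
      obtain ⟨h1, h2⟩ := concat_inj' heq
      refine ⟨S₀.flatten, y', Language.join_mem_kstar (fun z hz => (hS z (by simp [hz])).1),
        ?_, h1⟩
      subst h2
      simpa using hy.1

/-- DFA for the empty language. -/
private def zeroDFA : DFA α Unit where
  step _ _ := ()
  start := ()
  accept := ∅

private lemma lang_isRegular_zero : (0 : Language α).IsRegular :=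
  ⟨Unit, inferInstance, zeroDFA, by
    ext w
    simp only [DFA.mem_accepts, zeroDFA, Set.mem_empty_iff_false, false_iff]
    exact fun h => h⟩

private lemma mem_lang_singleton {x y : List α} : x ∈ ({y} : Language α) ↔ x = y := Iff.rfl

/-- DFA for the language `{[]}`. -/
private def oneDFA : DFA α Bool where
  step _ _ := false
  start := true
  accept := {true}

private lemma oneDFA_evalFrom_false (w : List α) : (oneDFA (α := α)).evalFrom false w = false := by
  induction w with
  | nil => rfl
  | cons a t ih => simpa [DFA.evalFrom, oneDFA] using ih

private lemma lang_isRegular_one : (1 : Language α).IsRegular :=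
  ⟨Bool, inferInstance, oneDFA, by
    ext w
    rw [DFA.mem_accepts]
    cases w with
    | nil => simp [oneDFA, Language.mem_one, DFA.eval]
    | cons a t =>
      have : (oneDFA (α := α)).eval (a :: t) = false := by
        simpa [DFA.eval, DFA.evalFrom, oneDFA] using oneDFA_evalFrom_false t
      rw [this]
      simp [oneDFA, Language.mem_one]⟩

open Classical in
/-- DFA for the language `{[a]}`. -/
private noncomputable def charDFA (a : α) : DFA α (Fin 3) where
  step s b := if s = 0 ∧ b = a then 1 else 2
  start := 0
  accept := {1}

private lemma charDFA_evalFrom_two (a : α) (w : List α) :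
    (charDFA a).evalFrom 2 w = 2 := by
  induction w with
  | nil => rfl
  | cons b t ih =>
    have : (charDFA a).step 2 b = 2 := by simp [charDFA]
    simpa [DFA.evalFrom, this] using ih

private lemma lang_isRegular_char (a : α) : ({[a]} : Language α).IsRegular := by
  classical
  refine ⟨Fin 3, inferInstance, charDFA a, ?_⟩
  ext w
  rw [DFA.mem_accepts]
  match w with
  | [] => simp [charDFA, DFA.eval, mem_lang_singleton]
  | [b] =>
    by_cases hb : b = a <;>
      simp [charDFA, DFA.eval, DFA.evalFrom, hb, mem_lang_singleton]
  | b :: c :: t =>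
    have h2 : (charDFA a).step ((charDFA a).step 0 b) c = 2 := by
      by_cases hb : b = a <;> simp [charDFA, hb]
    have : (charDFA a).eval (b :: c :: t) = 2 := by
      show (charDFA a).evalFrom ((charDFA a).step ((charDFA a).step 0 b) c) t = 2
      rw [h2]; exact charDFA_evalFrom_two a t
    rw [this]
    simp [charDFA, mem_lang_singleton]

variable {σ1 σ2 σ : Type}

/-- DFA for concatenation of two DFA languages. -/
private def mulDFA (M1 : DFA α σ1) (M2 : DFA α σ2) : DFA α (σ1 × Set σ2) where
  step p a := (M1.step p.1 a,
    (fun s => M2.step s a) '' p.2 ∪ {s | M1.step p.1 a ∈ M1.accept ∧ s = M2.start})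
  start := (M1.start, {s | M1.start ∈ M1.accept ∧ s = M2.start})
  accept := {p | ∃ s ∈ p.2, s ∈ M2.accept}

private lemma mulDFA_eval (M1 : DFA α σ1) (M2 : DFA α σ2) (w : List α) :
    (mulDFA M1 M2).eval w =
      (M1.eval w,
       {s | ∃ u v, u ++ v = w ∧ u ∈ M1.accepts ∧ s = M2.evalFrom M2.start v}) := by
  induction w using List.reverseRecOn with
  | nil =>
    refine Prod.ext rfl ?_
    ext s
    show (M1.start ∈ M1.accept ∧ s = M2.start) ↔ _
    simp only [Set.mem_setOf_eq]
    constructor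
    · rintro ⟨h1, rfl⟩
      exact ⟨[], [], rfl, by rwa [DFA.mem_accepts], rfl⟩
    · rintro ⟨u, v, huv, hu, rfl⟩
      obtain ⟨rfl, rfl⟩ := List.append_eq_nil_iff.mp huv
      exact ⟨by rwa [DFA.mem_accepts] at hu, rfl⟩
  | append_singleton w a ih =>
    rw [DFA.eval_append_singleton, ih]
    refine Prod.ext ?_ ?_
    · show M1.step (M1.eval w) a = M1.eval (w ++ [a])
      rw [DFA.eval_append_singleton]
    · show ((fun s => M2.step s a) '' _ ∪ _ : Set σ2) = _
      ext s
      simp only [Set.mem_union, Set.mem_image, Set.mem_setOf_eq]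
      constructor
      · rintro (⟨t, ⟨u, v, huv, hu, rfl⟩, rfl⟩ | ⟨hacc, rfl⟩)
        · exact ⟨u, v ++ [a], by rw [← List.append_assoc, huv], hu,
            (M2.evalFrom_append_singleton _ _ _).symm⟩
        · refine ⟨w ++ [a], [], by simp, ?_, rfl⟩
          rw [DFA.mem_accepts, DFA.eval_append_singleton]
          exact hacc
      · rintro ⟨u, v, huv, hu, rfl⟩
        rcases v.eq_nil_or_concat with rfl | ⟨v', b, rfl⟩
        · right
          rw [List.append_nil] at huv
          subst huv
          rw [DFA.mem_accepts, DFA.eval_append_singleton] at hu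
          exact ⟨hu, rfl⟩
        · left
          rw [List.concat_eq_append] at huv ⊢
          rw [← List.append_assoc] at huv
          obtain ⟨h1, h2⟩ := concat_inj' huv
          subst h2
          exact ⟨M2.evalFrom M2.start v', ⟨u, v', h1, hu, rfl⟩,
            (M2.evalFrom_append_singleton _ _ _).symm⟩

private lemma mulDFA_accepts (M1 : DFA α σ1) (M2 : DFA α σ2) :
    (mulDFA M1 M2).accepts = M1.accepts * M2.accepts := by
  ext w
  rw [DFA.mem_accepts, Language.mem_mul]
  show (mulDFA M1 M2).eval w ∈ {p : σ1 × Set σ2 | ∃ s ∈ p.2, s ∈ M2.accept} ↔ _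
  rw [mulDFA_eval]
  simp only [Set.mem_setOf_eq]
  constructor
  · rintro ⟨s, ⟨u, v, huv, hu, rfl⟩, hs⟩
    exact ⟨u, hu, v, by rwa [DFA.mem_accepts], huv⟩
  · rintro ⟨u, hu, v, hv, huv⟩
    exact ⟨M2.evalFrom M2.start v, ⟨u, v, huv, hu, rfl⟩, by rwa [DFA.mem_accepts] at hv⟩

/-- DFA for the Kleene star of a DFA language. -/
private def starDFA (M : DFA α σ) : DFA α (Bool × Set σ) where
  step p a := (false, (fun s => M.step s a) '' p.2 ∪
    {s | (∃ t ∈ p.2, M.step t a ∈ M.accept) ∧ s = M.start})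
  start := (true, {M.start})
  accept := {p | p.1 = true ∨ ∃ s ∈ p.2, s ∈ M.accept}

private lemma starDFA_eval (M : DFA α σ) (w : List α) :
    (starDFA M).eval w =
      (w.isEmpty,
       {s | ∃ u v, u ++ v = w ∧ u ∈ M.accepts∗ ∧ s = M.evalFrom M.start v}) := by
  induction w using List.reverseRecOn with
  | nil =>
    refine Prod.ext rfl ?_
    ext s
    show s ∈ ({M.start} : Set σ) ↔ _
    simp only [Set.mem_singleton_iff, Set.mem_setOf_eq]
    constructor
    · rintro rfl
      exact ⟨[], [], rfl, Language.nil_mem_kstar _, rfl⟩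
    · rintro ⟨u, v, huv, hu, rfl⟩
      obtain ⟨rfl, rfl⟩ := List.append_eq_nil_iff.mp huv
      rfl
  | append_singleton w a ih =>
    rw [DFA.eval_append_singleton, ih]
    refine Prod.ext (by simp [starDFA]) ?_
    show ((fun s => M.step s a) '' _ ∪ _ : Set σ) = _
    ext s
    simp only [Set.mem_union, Set.mem_image, Set.mem_setOf_eq]
    constructor
    · rintro (⟨t, ⟨u, v, huv, hu, rfl⟩, rfl⟩ | ⟨⟨t, ⟨u, v, huv, hu, rfl⟩, hacc⟩, rfl⟩)
      · exact ⟨u, v ++ [a], by rw [← List.append_assoc, huv], hu,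
          (M.evalFrom_append_singleton _ _ _).symm⟩
      · refine ⟨w ++ [a], [], by simp, ?_, rfl⟩
        have hvmem : v ++ [a] ∈ M.accepts := by
          rw [DFA.mem_accepts]
          show M.evalFrom M.start (v ++ [a]) ∈ M.accept
          rw [M.evalFrom_append_singleton]
          exact hacc
        rw [← huv, List.append_assoc]
        exact append_mem_kstar' hu ⟨[v ++ [a]], by simp, by simpa using hvmem⟩
    · rintro ⟨u, v, huv, hu, rfl⟩
      rcases v.eq_nil_or_concat with rfl | ⟨v', b, rfl⟩
      · right
        rw [List.append_nil] at huv
        subst huv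
        obtain ⟨u', x, hu', hx, hux⟩ := kstar_concat_decomp hu
        refine ⟨⟨M.evalFrom M.start x, ⟨u', x, hux, hu', rfl⟩, ?_⟩, rfl⟩
        rw [← M.evalFrom_append_singleton]
        rwa [DFA.mem_accepts] at hx
      · left
        rw [List.concat_eq_append] at huv ⊢
        rw [← List.append_assoc] at huv
        obtain ⟨h1, h2⟩ := concat_inj' huv
        subst h2
        exact ⟨M.evalFrom M.start v', ⟨u, v', h1, hu, rfl⟩,
          (M.evalFrom_append_singleton _ _ _).symm⟩

private lemma starDFA_accepts (M : DFA α σ) :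
    (starDFA M).accepts = M.accepts∗ := by
  ext w
  rw [DFA.mem_accepts]
  show (starDFA M).eval w ∈ {p : Bool × Set σ | p.1 = true ∨ ∃ s ∈ p.2, s ∈ M.accept} ↔ _
  rw [starDFA_eval]
  simp only [Set.mem_setOf_eq]
  constructor
  · rintro (hnil | ⟨s, ⟨u, v, huv, hu, rfl⟩, hs⟩)
    · rw [List.isEmpty_iff] at hnil
      subst hnil
      exact Language.nil_mem_kstar _
    · rw [← huv]
      have hv : v ∈ M.accepts := by rw [DFA.mem_accepts]; exact hs
      exact append_mem_kstar' hu ⟨[v], by simp, by simpa using hv⟩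
  · intro hw
    rcases w.eq_nil_or_concat with rfl | ⟨w', b, rfl⟩
    · exact Or.inl rfl
    · right
      rw [List.concat_eq_append] at hw ⊢
      obtain ⟨u, x, hu, hx, hux⟩ := kstar_concat_decomp hw
      refine ⟨M.evalFrom M.start (x ++ [b]), ⟨u, x ++ [b], by rw [← List.append_assoc, hux], hu, rfl⟩, ?_⟩
      rwa [DFA.mem_accepts] at hx

private lemma lang_isRegular_mul {L1 L2 : Language α} (h1 : L1.IsRegular)
    (h2 : L2.IsRegular) : (L1 * L2).IsRegular := by
  obtain ⟨σ1, _, M1, rfl⟩ := h1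
  obtain ⟨σ2, _, M2, rfl⟩ := h2
  exact ⟨σ1 × Set σ2, inferInstance, mulDFA M1 M2, mulDFA_accepts M1 M2⟩

private lemma lang_isRegular_kstar {L : Language α} (h : L.IsRegular) :
    (L∗).IsRegular := by
  obtain ⟨σ, _, M, rfl⟩ := h
  exact ⟨Bool × Set σ, inferInstance, starDFA M, starDFA_accepts M⟩

end AuxRegular


section MainAux

variable {α : Type}

private lemma unionFree_regex_isRegular (r : RegularExpression α) (h : r.UnionFree) :
    r.matches'.IsRegular := by
  induction r with
  | zero => exact lang_isRegular_zero
  | epsilon => exact False.elim h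
  | char a => rw [RegularExpression.matches'_char]; exact lang_isRegular_char a
  | plus P Q ihP ihQ => exact False.elim h
  | comp P Q ihP ihQ =>
    show (P.matches' * Q.matches').IsRegular
    exact lang_isRegular_mul (ihP h.1) (ihQ h.2)
  | star P ih =>
    rw [RegularExpression.matches'_star]
    exact lang_isRegular_kstar (ih h)

private lemma lang_finite_one : (1 : Language α).Finite := by
  rw [Language.one_def]; exact Set.finite_singleton _

private lemma lang_finite_mul {L1 L2 : Language α} (h1 : L1.Finite) (h2 : L2.Finite) :
    (L1 * L2).Finite := by
  rw [Language.mul_def]; exact Set.Finite.image2 _ h1 h2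

private lemma unionFree_decomp :
    ∀ r : RegularExpression α, r.UnionFree → r.matches'.Infinite →
      ∃ Ll Li Lr : Language α, Ll.Finite ∧ Li.IsRegular ∧ Lr.IsRegular ∧
        Li ≠ 0 ∧ Li ≠ 1 ∧ r.matches' = Ll * Li∗ * Lr := by
  intro r
  induction r with
  | zero =>
    intro _ hInf
    exact absurd (Set.finite_empty : (0 : Language α).Finite) hInf
  | epsilon => intro h _; exact False.elim h
  | char a =>
    intro _ hInf
    exact absurd (Set.finite_singleton [a] : ({[a]} : Language α).Finite) hInf
  | plus P Q ihP ihQ => intro h _; exact False.elim h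
  | comp P Q ihP ihQ =>
    intro hUF hInf
    obtain ⟨hP, hQ⟩ := hUF
    have hmm : (P.comp Q).matches' = P.matches' * Q.matches' := rfl
    by_cases hPI : P.matches'.Infinite
    · obtain ⟨Ll, Li, Lr, hfin, hLi, hLr, h0, h1, heq⟩ := ihP hP hPI
      refine ⟨Ll, Li, Lr * Q.matches', hfin, hLi,
        lang_isRegular_mul hLr (unionFree_regex_isRegular Q hQ), h0, h1, ?_⟩
      rw [hmm, heq]
      simp only [mul_assoc]
    · have hPf : P.matches'.Finite := Set.not_infinite.mp hPI
      have hQI : Q.matches'.Infinite := by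
        by_contra hq
        exact hInf (hmm ▸ lang_finite_mul hPf (Set.not_infinite.mp hq))
      obtain ⟨Ll, Li, Lr, hfin, hLi, hLr, h0, h1, heq⟩ := ihQ hQ hQI
      refine ⟨P.matches' * Ll, Li, Lr, lang_finite_mul hPf hfin, hLi, hLr, h0, h1, ?_⟩
      rw [hmm, heq]
      simp only [mul_assoc]
  | star P ih =>
    intro hUF hInf
    rw [RegularExpression.matches'_star] at hInf ⊢
    refine ⟨1, P.matches', 1, lang_finite_one, unionFree_regex_isRegular P hUF,
      lang_isRegular_one, ?_, ?_, by rw [one_mul, mul_one]⟩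
    · intro h0
      rw [h0, kstar_zero] at hInf
      exact absurd lang_finite_one hInf
    · intro h1
      rw [h1, kstar_one] at hInf
      exact absurd lang_finite_one hInf

end MainAux

/-- Every infinite union-free language `L` can be written as `L = Lₗ · Lᵢ∗ · Lᵣ`
with `Lₗ` finite and `Lᵢ ∉ {∅, {ε}}`. -/
theorem unionFree_infinite_decomposition [Fintype α] (L : Language α)
    (hUF : IsUnionFree L) (hInf : L.Infinite) :
    ∃ Ll Li Lr : Language α, Ll.Finite ∧ Li.IsRegular ∧ Lr.IsRegular ∧
      Li ≠ 0 ∧ Li ≠ 1 ∧ L = Ll * Li∗ * Lr := by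
  obtain ⟨r, hr, rfl⟩ := hUF
  exact unionFree_decomp r hr hInf
end

section
/- Let α be a finite alphabet and a ∈ α. The language L = {a^{2n} : n ≥ 0} of all words consisting of an even number of the letter a is a star language, a left-sided comet, and a right-sided comet, but L does not have the power-separating property (i.e., for every m ≥ 1 there is a word x such that the set {x^n : n ≥ m} neither is disjoint from L nor is contained in L). -/
open Language Computability

universe u

variable {α : Type}

/-- The language of all words `a^(2n)`. -/
def evenPow (a : α) : Language α := {w : List α | ∃ n : ℕ, w = List.replicate (2 * n) a}

/-!
`evenPow a` is `{aa}∗ = 1 · {aa}∗ = {aa}∗ · 1`, and finite languages such as `{aa}` and `1` are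
regular by Myhill–Nerode, since each left quotient of a finite language is a set of suffixes of its
finitely many words. The powers `a^n` of the one-letter word lie in the language exactly for even
`n`, so beyond any threshold `m` some power is in it and some is not.
-/

namespace Language

theorem IsRegular.of_finite {L : Language α} (hL : L.Finite) : L.IsRegular := by
  refine .of_finite_range_leftQuotient ?_
  have hsuffixes : (⋃ w ∈ L, {v | v ∈ w.tails}).Finite :=
    hL.biUnion fun w _ => w.tails.finite_toSet
  refine hsuffixes.powerset.subset ?_
  rintro _ ⟨x, rfl⟩ y hy
  exact Set.mem_biUnion hy ((List.mem_tails _ _).2 (List.suffix_append x y))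

theorem mem_kstar_singleton_iff {w x : List α} :
    x ∈ ({w} : Language α)∗ ↔ ∃ n, x = (List.replicate n w).flatten := by
  simp only [mem_kstar]
  constructor
  · rintro ⟨l, rfl, hl⟩
    exact ⟨l.length, by rw [← List.eq_replicate_iff.2 ⟨rfl, hl⟩]⟩
  · rintro ⟨n, rfl⟩
    exact ⟨_, rfl, fun _ => List.eq_of_mem_replicate⟩

theorem singleton_ne_one {w : List α} (hw : w ≠ []) : ({w} : Language α) ≠ 1 := by
  rw [one_def]
  exact fun h => hw (Set.singleton_eq_singleton_iff.1 h)

end Language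

open Language

theorem wordPow_singleton (a : α) (n : ℕ) : wordPow [a] n = List.replicate n a := by
  induction n with
  | zero => rfl
  | succ n ih => rw [wordPow, ih, List.replicate_succ]; rfl

theorem evenPow_eq_kstar (a : α) : evenPow a = ({[a, a]} : Language α)∗ := by
  ext x
  rw [mem_kstar_singleton_iff, show [a, a] = List.replicate 2 a from rfl]
  exact exists_congr fun n => by rw [List.flatten_replicate_replicate, mul_comm]

theorem replicate_mem_evenPow_iff (a : α) (n : ℕ) :
    List.replicate n a ∈ evenPow a ↔ Even n := by
  rw [even_iff_two_dvd]
  exact exists_congr fun k => by simp [List.replicate_inj]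

theorem evenPow_star_comet_not_powerSep_general (a : α) :
    IsStarLang (evenPow a) ∧ IsLeftComet (evenPow a) ∧ IsRightComet (evenPow a) ∧
    (∀ m : ℕ, 1 ≤ m → ∃ x : List α,
      (∃ n : ℕ, m ≤ n ∧ wordPow x n ∈ evenPow a) ∧
      (∃ n : ℕ, m ≤ n ∧ wordPow x n ∉ evenPow a)) := by
  have hreg : ({[a, a]} : Language α).IsRegular := .of_finite (Set.finite_singleton _)
  have hreg_one : (1 : Language α).IsRegular := .of_finite (Set.finite_singleton _)
  have hne_zero : ({[a, a]} : Language α) ≠ 0 := Set.singleton_ne_empty _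
  have hne_one : ({[a, a]} : Language α) ≠ 1 := singleton_ne_one (List.cons_ne_nil _ _)
  refine ⟨⟨_, hreg, evenPow_eq_kstar a⟩,
    ⟨1, _, hreg_one, hreg, hne_zero, hne_one, by rw [evenPow_eq_kstar, one_mul]⟩,
    ⟨_, 1, hreg, hreg_one, hne_zero, hne_one, by rw [evenPow_eq_kstar, mul_one]⟩,
    fun m _ => ⟨[a], ⟨2 * m, by omega, ?_⟩, ⟨2 * m + 1, by omega, ?_⟩⟩⟩
  · rw [wordPow_singleton, replicate_mem_evenPow_iff]
    exact even_two_mul m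
  · rw [wordPow_singleton, replicate_mem_evenPow_iff]
    exact Nat.not_even_two_mul_add_one m

/-- `{a^(2n) : n ≥ 0}` is a star language, a left-sided comet and a right-sided comet,
but does not have the power-separating property. -/
theorem evenPow_star_comet_not_powerSep [Fintype α] (a : α) :
    IsStarLang (evenPow a) ∧ IsLeftComet (evenPow a) ∧ IsRightComet (evenPow a) ∧
    (∀ m : ℕ, 1 ≤ m → ∃ x : List α,
      (∃ n : ℕ, m ≤ n ∧ wordPow x n ∈ evenPow a) ∧
      (∃ n : ℕ, m ≤ n ∧ wordPow x n ∉ evenPow a)) :=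
  evenPow_star_comet_not_powerSep_general a
end

section
/- Let α be a finite alphabet with a designated letter a. Then the family of monoidal languages over α is a proper subset of the family of star languages over α, which in turn is a proper subset of the family of union-free languages over α: every monoidal language is a star language, every star language is union-free, there is a star language that is not monoidal, and there is a union-free language that is not a star language. -/
/-!
Every regular language is a finite union of union-free languages. This is the
McNaughton–Yamada construction, read in the semiring generated by union-free languages: the words
leading a DFA from `p` into `F` with all intermediate states in `S ∪ {s}` are
`P_S(p, F) + P_S(p, s) · P_S(s, s)∗ · P_S(s, F)`, and the star of a finite union of union-free
languages is again union-free because `(K + K')∗ = (K∗ K'∗)∗`. So `H∗` is union-free for regular `H`.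
For the strict inclusions: `⊤ = ⊤∗`, `{ε} = ∅∗ ≠ ⊤`, and `{a}` is union-free but misses the
empty word, which every star language contains.
-/

open Language Computability

universe u

variable {α : Type}

theorem kstar_add {K : Type*} [KleeneAlgebra K] (a b : K) : (a + b)∗ = (a∗ * b∗)∗ := by
  apply le_antisymm
  · refine kstar_mono (add_le ?_ ?_)
    · calc a = a * 1 := (mul_one a).symm
        _ ≤ a∗ * b∗ := mul_le_mul' le_kstar one_le_kstar
    · calc b = 1 * b := (one_mul b).symm
        _ ≤ a∗ * b∗ := mul_le_mul' one_le_kstar le_kstar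
  · calc (a∗ * b∗)∗ ≤ ((a + b)∗ * (a + b)∗)∗ :=
          kstar_mono (mul_le_mul' (kstar_mono le_self_add) (kstar_mono le_add_self))
      _ = (a + b)∗ := by rw [kstar_mul_kstar, kstar_idem]

namespace Language

theorem isRegular_zero : (0 : Language α).IsRegular :=
  ⟨Unit, inferInstance, ⟨fun _ _ => (), (), ∅⟩, rfl⟩

theorem isRegular_top : (⊤ : Language α).IsRegular := by
  have h : (0 : Language α)ᶜ = ⊤ := by rw [zero_def]; exact Set.compl_empty
  exact h ▸ isRegular_zero.compl

end Language

theorem isUnionFree_zero : IsUnionFree (0 : Language α) :=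
  ⟨0, trivial, rfl⟩

theorem isUnionFree_singleton_char (c : α) : IsUnionFree ({[c]} : Language α) :=
  ⟨.char c, trivial, rfl⟩

theorem IsUnionFree.mul {L K : Language α} (hL : IsUnionFree L) (hK : IsUnionFree K) :
    IsUnionFree (L * K) := by
  obtain ⟨r, hr, rfl⟩ := hL
  obtain ⟨s, hs, rfl⟩ := hK
  exact ⟨.comp r s, ⟨hr, hs⟩, rfl⟩

theorem IsUnionFree.kstar {L : Language α} (hL : IsUnionFree L) : IsUnionFree L∗ := by
  obtain ⟨r, hr, rfl⟩ := hL
  exact ⟨.star r, hr, rfl⟩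

theorem isUnionFree_one : IsUnionFree (1 : Language α) := by
  simpa using isUnionFree_zero.kstar

theorem isUnionFree_singleton : ∀ w : List α, IsUnionFree ({w} : Language α)
  | [] => isUnionFree_one
  | c :: w => by
    have : ({c :: w} : Language α) = {[c]} * {w} :=
      (Set.image2_singleton (f := (· ++ ·)) (a := [c]) (b := w)).symm
    exact this ▸ (isUnionFree_singleton_char c).mul (isUnionFree_singleton w)

def unionFreeSubmonoid : Submonoid (Language α) where
  carrier := {L | IsUnionFree L}
  one_mem' := isUnionFree_one
  mul_mem' := IsUnionFree.mul

/-- Finite unions of union-free languages. -/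
abbrev unionFreeSums : Subsemiring (Language α) :=
  (unionFreeSubmonoid (α := α)).subsemiringClosure

theorem IsUnionFree.mem_unionFreeSums {L : Language α} (hL : IsUnionFree L) :
    L ∈ unionFreeSums :=
  (Submonoid.subsemiringClosure_mem _).2 (AddSubmonoid.subset_closure hL)

theorem IsUnionFree.kstar_of_mem_unionFreeSums {L : Language α} (hL : L ∈ unionFreeSums) :
    IsUnionFree L∗ := by
  rw [Submonoid.subsemiringClosure_mem _] at hL
  induction hL using AddSubmonoid.closure_induction with
  | mem K hK => exact IsUnionFree.kstar hK
  | zero => simpa using isUnionFree_one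
  | add K K' _ _ hK hK' => rw [kstar_add]; exact (hK.mul hK').kstar

theorem kstar_mem_unionFreeSums {L : Language α} (hL : L ∈ unionFreeSums) :
    L∗ ∈ unionFreeSums :=
  (IsUnionFree.kstar_of_mem_unionFreeSums hL).mem_unionFreeSums

theorem mem_unionFreeSums_of_finite {L : Language α} (hL : Set.Finite L) :
    L ∈ unionFreeSums := by
  induction L, hL using Set.Finite.induction_on with
  | empty => exact zero_mem _
  | @insert w L _ _ ih =>
    have : (insert w L : Set (List α)) = ({w} : Language α) + (show Language α from L) := rfl
    rw [this]
    exact add_mem (isUnionFree_singleton w).mem_unionFreeSums ih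

namespace DFA

variable {σ : Type} (M : DFA α σ)

/-- Reading `w` from `p` ends in `F`, and all states strictly between lie in `S`. -/
def IsPathVia (S F : Set σ) : σ → List α → Prop
  | p, [] => p ∈ F
  | p, c :: w => (w = [] ∧ M.step p c ∈ F) ∨ (M.step p c ∈ S ∧ IsPathVia S F (M.step p c) w)

def pathsVia (S : Set σ) (p : σ) (F : Set σ) : Language α :=
  {w | M.IsPathVia S F p w}

variable {M} {S T F : Set σ} {s : σ}

theorem IsPathVia.mono (hST : S ⊆ T) :
    ∀ {p w}, M.IsPathVia S F p w → M.IsPathVia T F p w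
  | _, [], h => h
  | _, _ :: _, .inl h => .inl h
  | _, _ :: _, .inr ⟨hS, h⟩ => .inr ⟨hST hS, h.mono hST⟩

theorem IsPathVia.append (hs : s ∈ T) :
    ∀ {p u v}, M.IsPathVia T {s} p u → M.IsPathVia T F s v → M.IsPathVia T F p (u ++ v)
  | _, [], _, rfl, hv => hv
  | _, _ :: _, _, .inl ⟨rfl, h⟩, hv => by
    obtain rfl : _ = s := h
    exact .inr ⟨hs, hv⟩
  | _, _ :: _, _, .inr ⟨hT, hu⟩, hv => .inr ⟨hT, hu.append hs hv⟩

theorem isPathVia_univ : ∀ {p w}, M.IsPathVia Set.univ F p w ↔ M.evalFrom p w ∈ F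
  | _, [] => Iff.rfl
  | p, c :: w => by
    rw [IsPathVia, isPathVia_univ, evalFrom_cons]
    refine ⟨?_, fun h => .inr ⟨trivial, h⟩⟩
    rintro (⟨rfl, h⟩ | ⟨-, h⟩) <;> exact h

theorem IsPathVia.length_le_one : ∀ {p w}, M.IsPathVia ∅ F p w → w.length ≤ 1
  | _, [], _ => zero_le_one
  | _, [_], _ => le_rfl
  | _, _ :: _ :: _, .inl ⟨h, _⟩ => (List.cons_ne_nil _ _ h).elim
  | _, _ :: _ :: _, .inr ⟨h, _⟩ => h.elim

theorem pathsVia_mono (hST : S ⊆ T) (p : σ) (F : Set σ) :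
    M.pathsVia S p F ≤ M.pathsVia T p F :=
  fun _ => IsPathVia.mono hST

theorem pathsVia_mul_le (hs : s ∈ T) (p : σ) (F : Set σ) :
    M.pathsVia T p {s} * M.pathsVia T s F ≤ M.pathsVia T p F := by
  rintro _ ⟨u, hu, v, hv, rfl⟩
  exact IsPathVia.append hs hu hv

theorem IsPathVia.mem_of_insert :
    ∀ {p w}, M.IsPathVia (insert s S) F p w →
      w ∈ M.pathsVia S p F + M.pathsVia S p {s} * (M.pathsVia S s {s})∗ * M.pathsVia S s F
  | _, [], h => .inl h
  | _, _ :: _, .inl h => .inl (.inl h)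
  | p, c :: w, .inr ⟨hstep, hw⟩ => by
    have ih := hw.mem_of_insert
    rcases hstep with hs | hS
    · rw [hs] at ih
      have hw : w ∈ (M.pathsVia S s {s})∗ * M.pathsVia S s F := by
        rwa [← one_add_mul_kstar, add_mul, one_mul]
      rw [mul_assoc]
      exact .inr ⟨[c], .inl ⟨rfl, hs⟩, w, hw, rfl⟩
    · rcases ih with h | ⟨_, ⟨u, hu, y, hy, rfl⟩, v, hv, rfl⟩
      · exact .inl (.inr ⟨hS, h⟩)
      · exact .inr ⟨c :: u ++ y, ⟨c :: u, .inr ⟨hS, hu⟩, y, hy, rfl⟩, v, hv, rfl⟩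

theorem pathsVia_insert (p : σ) :
    M.pathsVia (insert s S) p F =
      M.pathsVia S p F + M.pathsVia S p {s} * (M.pathsVia S s {s})∗ * M.pathsVia S s F := by
  have hs : s ∈ insert s S := Set.mem_insert s S
  have hS : S ⊆ insert s S := Set.subset_insert s S
  refine le_antisymm (fun _ => IsPathVia.mem_of_insert) (add_le (pathsVia_mono hS p F) ?_)
  calc _ ≤ M.pathsVia (insert s S) p {s} * (M.pathsVia (insert s S) s {s})∗ *
          M.pathsVia (insert s S) s F := by
        gcongr <;> exact pathsVia_mono hS _ _
    _ ≤ M.pathsVia (insert s S) p {s} * M.pathsVia (insert s S) s F := by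
        rw [mul_assoc]
        gcongr
        exact kstar_mul_le_self (pathsVia_mul_le hs s F)
    _ ≤ M.pathsVia (insert s S) p F := pathsVia_mul_le hs p F

theorem pathsVia_mem_unionFreeSums [Fintype α] (S : Finset σ) (p : σ) (F : Set σ) :
    M.pathsVia S p F ∈ unionFreeSums := by
  classical
  induction S using Finset.induction_on generalizing p F with
  | empty =>
    refine mem_unionFreeSums_of_finite ((List.finite_length_le α 1).subset fun w hw => ?_)
    exact IsPathVia.length_le_one (by simpa [pathsVia] using hw)
  | insert s S _ ih =>
    rw [Finset.coe_insert, pathsVia_insert]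
    exact add_mem (ih p F)
      (mul_mem (mul_mem (ih p {s}) (kstar_mem_unionFreeSums (ih s {s}))) (ih s F))

theorem accepts_eq_pathsVia [Fintype σ] :
    M.accepts = M.pathsVia (Finset.univ : Finset σ) M.start M.accept := by
  ext w
  rw [Finset.coe_univ]
  exact isPathVia_univ.symm

end DFA

theorem Language.IsRegular.mem_unionFreeSums [Fintype α] {L : Language α} (hL : L.IsRegular) :
    L ∈ unionFreeSums := by
  obtain ⟨σ, _, M, rfl⟩ := hL
  exact M.accepts_eq_pathsVia ▸ M.pathsVia_mem_unionFreeSums _ _ _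

theorem IsStarLang.isUnionFree [Fintype α] {L : Language α} (hL : IsStarLang L) :
    IsUnionFree L := by
  obtain ⟨H, hH, rfl⟩ := hL
  exact IsUnionFree.kstar_of_mem_unionFreeSums hH.mem_unionFreeSums

theorem IsStarLang.nil_mem {L : Language α} (hL : IsStarLang L) : [] ∈ L := by
  obtain ⟨H, -, rfl⟩ := hL
  exact Language.nil_mem_kstar H

theorem IsMonoidal.isStarLang {L : Language α} (hL : IsMonoidal L) : IsStarLang L :=
  ⟨⊤, Language.isRegular_top, hL.trans (eq_top_iff.2 le_kstar).symm⟩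

theorem isStarLang_one : IsStarLang (1 : Language α) :=
  ⟨0, Language.isRegular_zero, kstar_zero.symm⟩

theorem not_isMonoidal_one (a : α) : ¬ IsMonoidal (1 : Language α) := fun h =>
  List.cons_ne_nil a [] ((Language.mem_one _).1 (h ▸ trivial : [a] ∈ (1 : Language α)))

/-- `MON ⊂ STAR ⊂ UF`: proper inclusions of monoidal in star in union-free languages. -/
theorem mon_ssubset_star_ssubset_unionFree [Fintype α] (a : α) :
    (∀ L : Language α, IsMonoidal L → IsStarLang L) ∧
    (∀ L : Language α, IsStarLang L → IsUnionFree L) ∧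
    (∃ L : Language α, IsStarLang L ∧ ¬ IsMonoidal L) ∧
    (∃ L : Language α, IsUnionFree L ∧ ¬ IsStarLang L) :=
  ⟨fun _ => IsMonoidal.isStarLang, fun _ => IsStarLang.isUnionFree,
    ⟨1, isStarLang_one, not_isMonoidal_one a⟩,
    ⟨{[a]}, isUnionFree_singleton_char a, fun h => List.cons_ne_nil a [] h.nil_mem.symm⟩⟩
end
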